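/- arXiv:1104.4055 — 6 statements merged into one kernel-verified Lean document; each statement's English description precedes it below -/
import Mathlib

section
/- For every complex number α, every integer n ≥ 0 and every real x > 0, the n-fold iterate of the Bessel operator applied to the function x ↦ e^{−x} x^α satisfies 𝒜ⁿ(e^{−x} x^α)(x) = (−1)ⁿ e^{−x} x^α p_n(x;α), where p_n(·;α) are the recursively defined polynomials. -/
/-!
On `(0, ∞)` the derivative of `e^{-x} x^β P(x)` is `e^{-x} x^{β-1} (βP - xP + xP')(x)`, so the
family of such functions is stable under differentiation, the exponent dropping by one each
time. Applying this twice, the Bessel operator sends `e^{-x} x^α Q(x)` to `e^{-x} x^α R(x)`,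
where the factors `x²` and `x` in front of the derivatives restore the exponent `α`, and `R` is
exactly minus the recursion step defining `p_{n+1}` from `p_n`. Induction on `n` concludes.
-/

open Polynomial

/-- The polynomials `p_n(x; α)` defined recursively by
`p_0 = 1`, `p_{n+1} = x² p_n'' − x(2x − 1 − 2α) p_n' − ((2α+1)x − α²) p_n`. -/
noncomputable def pseq (α : ℂ) : ℕ → ℂ[X]
  | 0 => 1
  | n + 1 =>
      X ^ 2 * derivative (derivative (pseq α n))
        - X * (2 * X - C (1 + 2 * α)) * derivative (pseq α n)
        - (C (2 * α + 1) * X - C (α ^ 2)) * pseq α n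

/-- The Bessel operator `(𝒜f)(x) = −x² f''(x) − x f'(x) + x² f(x)`. -/
noncomputable def besselOp (f : ℝ → ℂ) : ℝ → ℂ :=
  fun x => -(x : ℂ) ^ 2 * deriv (deriv f) x - (x : ℂ) * deriv f x + (x : ℂ) ^ 2 * f x

open Set

noncomputable section

def expCpowPoly (β : ℂ) (P : ℂ[X]) : ℝ → ℂ :=
  fun x => Complex.exp (-x) * (x : ℂ) ^ β * P.eval (x : ℂ)

def expCpowPolyDeriv (β : ℂ) (P : ℂ[X]) : ℂ[X] :=
  C β * P - X * P + X * derivative P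

def pseqStep (α : ℂ) (P : ℂ[X]) : ℂ[X] :=
  X ^ 2 * derivative (derivative P)
    - X * (2 * X - C (1 + 2 * α)) * derivative P
    - (C (2 * α + 1) * X - C (α ^ 2)) * P

end

lemma pseq_succ (α : ℂ) (n : ℕ) : pseq α (n + 1) = pseqStep α (pseq α n) := rfl

lemma pseqStep_C_mul (α c : ℂ) (P : ℂ[X]) : pseqStep α (C c * P) = C c * pseqStep α P := by
  simp only [pseqStep, derivative_mul, derivative_C, zero_mul, zero_add]
  ring

lemma cpow_eq_cpow_sub_one_mul {x : ℂ} (hx : x ≠ 0) (β : ℂ) : x ^ β = x ^ (β - 1) * x := by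
  conv_lhs => rw [← sub_add_cancel β 1]
  rw [Complex.cpow_add _ _ hx, Complex.cpow_one]

lemma hasDerivAt_expCpowPoly (β : ℂ) (P : ℂ[X]) {x : ℝ} (hx : 0 < x) :
    HasDerivAt (expCpowPoly β P) (expCpowPoly (β - 1) (expCpowPolyDeriv β P) x) x := by
  have hx0 : (x : ℂ) ≠ 0 := by exact_mod_cast hx.ne'
  have hofReal : HasDerivAt (fun t : ℝ => (t : ℂ)) 1 x := (hasDerivAt_id x).ofReal_comp
  have hexp : HasDerivAt (fun t : ℝ => Complex.exp (-t)) (Complex.exp (-x) * -1) x :=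
    hofReal.neg.cexp
  have hcpow : HasDerivAt (fun t : ℝ => (t : ℂ) ^ β) (β * (x : ℂ) ^ (β - 1) * 1) x :=
    (Complex.hasStrictDerivAt_cpow_const (Or.inl (by simpa using hx))).hasDerivAt.comp x hofReal
  have heval : HasDerivAt (fun t : ℝ => P.eval (t : ℂ)) ((derivative P).eval (x : ℂ) * 1) x :=
    (P.hasDerivAt (x : ℂ)).comp x hofReal
  refine ((hexp.mul hcpow).mul heval).congr_deriv ?_
  simp only [expCpowPoly, expCpowPolyDeriv, Pi.mul_apply, eval_add, eval_sub, eval_mul, eval_C,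
    eval_X, cpow_eq_cpow_sub_one_mul hx0 β]
  ring

lemma deriv_expCpowPoly_eqOn (β : ℂ) (P : ℂ[X]) :
    EqOn (deriv (expCpowPoly β P)) (expCpowPoly (β - 1) (expCpowPolyDeriv β P)) (Ioi 0) :=
  fun _ hx => (hasDerivAt_expCpowPoly β P hx).deriv

lemma besselOp_congr_eqOn {f g : ℝ → ℂ} (h : EqOn f g (Ioi 0)) :
    EqOn (besselOp f) (besselOp g) (Ioi 0) := by
  intro x hx
  have hfg : f =ᶠ[nhds x] g := h.eventuallyEq_of_mem (Ioi_mem_nhds hx)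
  simp only [besselOp, hfg.deriv.deriv_eq, hfg.deriv_eq, hfg.self_of_nhds]

lemma besselOp_expCpowPoly (α : ℂ) (Q : ℂ[X]) :
    EqOn (besselOp (expCpowPoly α Q)) (expCpowPoly α (-pseqStep α Q)) (Ioi 0) := by
  intro x hx
  have hx0 : (x : ℂ) ≠ 0 := by exact_mod_cast hx.ne'
  have hderiv2 : deriv (deriv (expCpowPoly α Q)) x
      = expCpowPoly (α - 1 - 1) (expCpowPolyDeriv (α - 1) (expCpowPolyDeriv α Q)) x := by
    rw [((deriv_expCpowPoly_eqOn α Q).eventuallyEq_of_mem (Ioi_mem_nhds hx)).deriv_eq]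
    exact deriv_expCpowPoly_eqOn _ _ hx
  simp only [besselOp, hderiv2, deriv_expCpowPoly_eqOn α Q hx, expCpowPoly, pseqStep,
    expCpowPolyDeriv, eval_neg, eval_add, eval_sub, eval_mul, eval_pow, eval_C, eval_X,
    eval_one, eval_zero, eval_ofNat, derivative_add, derivative_sub, derivative_mul, derivative_C,
    derivative_X, cpow_eq_cpow_sub_one_mul hx0 α, cpow_eq_cpow_sub_one_mul hx0 (α - 1)]
  ring

lemma iterate_besselOp_eqOn (α : ℂ) (n : ℕ) :
    EqOn (besselOp^[n] (fun t : ℝ => Complex.exp (-t) * (t : ℂ) ^ α))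
      (expCpowPoly α (C ((-1) ^ n) * pseq α n)) (Ioi 0) := by
  induction n with
  | zero => intro x _; simp [expCpowPoly, pseq]
  | succ n ih =>
    have hstep :
        -pseqStep α (C ((-1) ^ n) * pseq α n) = C ((-1) ^ (n + 1)) * pseq α (n + 1) := by
      rw [pseqStep_C_mul, pseq_succ, pow_succ, map_mul, map_neg, map_one]
      ring
    rw [Function.iterate_succ_apply', ← hstep]
    exact (besselOp_congr_eqOn ih).trans (besselOp_expCpowPoly α _)

theorem stmt0 (α : ℂ) (n : ℕ) (x : ℝ) (hx : 0 < x) :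
    (besselOp^[n] (fun t : ℝ => Complex.exp (-t) * (t : ℂ) ^ α)) x
      = (-1 : ℂ) ^ n * Complex.exp (-x) * (x : ℂ) ^ α * (pseq α n).eval (x : ℂ) := by
  rw [iterate_besselOp_eqOn α n hx]
  simp only [expCpowPoly, eval_mul, eval_C]
  ring
end

section
/- For every complex number α and every integer n ≥ 0, the coefficient of xⁿ in p_n(x;α) equals (−2)ⁿ (α+1/2)_n and the constant term satisfies p_n(0;α) = α^{2n}; in particular, if Re(α) > −1/2 then p_n(x;α) has degree exactly n. -/
/-!
Writing `θ = x d/dx`, the recursion reads `p_{n+1} = (θ + α)² p_n − x (2θ + 2α + 1) p_n`. Since `θ`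
multiplies `x^k` by `k`, the coefficient of `x^{k+1}` in `p_{n+1}` is
`(k + 1 + α)² c_{k+1} − (2k + 1 + 2α) c_k`, where `c_j` are the coefficients of `p_n`. Hence
`deg p_n ≤ n`, the top coefficient gets multiplied by `−2 (α + 1/2 + n)` at each step, and the
constant term by `α²`. For `Re α > −1/2` none of the factors `α + 1/2 + k` vanishes.
-/

open Polynomial

lemma pseq_succ_s1 (α : ℂ) (n : ℕ) :
    pseq α (n + 1) = X * (X * derivative (derivative (pseq α n)))
      - C 2 * (X * (X * derivative (pseq α n))) + C (1 + 2 * α) * (X * derivative (pseq α n))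
      - C (2 * α + 1) * (X * pseq α n) + C (α ^ 2) * pseq α n := by
  rw [pseq, show (2 : ℂ[X]) = C 2 from rfl]
  ring

lemma coeff_pseq_succ (α : ℂ) (n m : ℕ) :
    (pseq α (n + 1)).coeff (m + 1) =
      (m + 1 + α) ^ 2 * (pseq α n).coeff (m + 1) - (2 * m + 1 + 2 * α) * (pseq α n).coeff m := by
  rw [pseq_succ_s1]
  cases m <;>
    simp only [coeff_add, coeff_sub, coeff_C_mul, coeff_X_mul, coeff_X_mul_zero,
      coeff_derivative] <;>
    push_cast <;> ring

lemma eval_zero_pseq (α : ℂ) (n : ℕ) : (pseq α n).eval 0 = α ^ (2 * n) := by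
  induction n with
  | zero => simp [pseq]
  | succ n ih =>
    calc (pseq α (n + 1)).eval 0 = α ^ 2 * (pseq α n).eval 0 := by simp [pseq]
      _ = α ^ (2 * (n + 1)) := by rw [ih]; ring

lemma natDegree_pseq_le (α : ℂ) (n : ℕ) : (pseq α n).natDegree ≤ n := by
  induction n with
  | zero => simp [pseq]
  | succ n ih =>
    rw [natDegree_le_iff_coeff_eq_zero] at ih ⊢
    intro k hk
    obtain ⟨m, rfl⟩ : ∃ m, k = m + 1 := Nat.exists_eq_add_one.mpr (by omega)
    rw [coeff_pseq_succ, ih (m + 1) (by omega), ih m (by omega)]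
    ring

lemma coeff_pseq_self (α : ℂ) (n : ℕ) :
    (pseq α n).coeff n = (-2 : ℂ) ^ n * (ascPochhammer ℂ n).eval (α + 1 / 2) := by
  induction n with
  | zero => simp [pseq]
  | succ n ih =>
    have hvanish : (pseq α n).coeff (n + 1) = 0 :=
      coeff_eq_zero_of_natDegree_lt ((natDegree_pseq_le α n).trans_lt n.lt_succ_self)
    rw [coeff_pseq_succ, hvanish, ih, ascPochhammer_succ_eval]
    ring

lemma ascPochhammer_eval_ne_zero_of_re_pos {z : ℂ} (hz : 0 < z.re) (n : ℕ) :
    (ascPochhammer ℂ n).eval z ≠ 0 := by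
  rw [Ne, ascPochhammer_eval_eq_zero_iff]
  rintro ⟨k, -, hk⟩
  have hre : (k : ℝ) = -z.re := by simpa using congrArg Complex.re hk
  linarith [k.cast_nonneg (α := ℝ)]

theorem stmt1 (α : ℂ) (n : ℕ) :
    (pseq α n).coeff n = (-2 : ℂ) ^ n * (ascPochhammer ℂ n).eval (α + 1 / 2)
    ∧ (pseq α n).eval 0 = α ^ (2 * n)
    ∧ (-(1 / 2 : ℝ) < α.re → (pseq α n).degree = n) := by
  refine ⟨coeff_pseq_self α n, eval_zero_pseq α n, fun hα => ?_⟩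
  have hre : 0 < (α + 1 / 2).re := by simpa [neg_lt_iff_pos_add] using hα
  refine degree_eq_of_le_of_coeff_ne_zero (degree_le_of_natDegree_le (natDegree_pseq_le α n)) ?_
  rw [coeff_pseq_self]
  exact mul_ne_zero (pow_ne_zero _ (by norm_num)) (ascPochhammer_eval_ne_zero_of_re_pos hre n)
end

section
/- For every complex number α, all integers n, k ≥ 0 and every real x > 0, one has 𝒜^k(e^{−x} x^α p_n(x;α))(x) = (−1)^k e^{−x} x^α p_{n+k}(x;α); consequently (−1)ⁿ 𝒜^k(e^{−x} x^α p_n(·;α))(x) = (−1)^k 𝒜ⁿ(e^{−x} x^α p_k(·;α))(x). -/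
open Polynomial

namespace Bessel

open Filter Set Topology

noncomputable def weighted (α : ℂ) (q : ℂ[X]) : ℝ → ℂ :=
  fun t => Complex.exp (-t) * (t : ℂ) ^ α * q.eval (t : ℂ)

noncomputable def conjEuler (α : ℂ) (q : ℂ[X]) : ℂ[X] :=
  X * derivative q + (C α - X) * q

theorem pseq_succ (α : ℂ) (n : ℕ) :
    pseq α (n + 1) = conjEuler α (conjEuler α (pseq α n)) - X ^ 2 * pseq α n := by
  simp only [pseq, conjEuler, derivative_add, derivative_mul, derivative_sub, derivative_X,
    derivative_C, C_add, C_mul, C_1, C_pow, C_ofNat]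
  ring

theorem hasDerivAt_weighted (α : ℂ) (q : ℂ[X]) {x : ℝ} (hx : 0 < x) :
    HasDerivAt (weighted α q) (weighted α (conjEuler α q) x / x) x := by
  have hx0 : (x : ℂ) ≠ 0 := by exact_mod_cast hx.ne'
  have hexp : HasDerivAt (fun t : ℝ => Complex.exp (-t)) (-Complex.exp (-x)) x := by
    simpa using ((hasDerivAt_id (x : ℂ)).neg.cexp).comp_ofReal
  have hpow : HasDerivAt (fun t : ℝ => (t : ℂ) ^ α) (α * (x : ℂ) ^ α / x) x := by
    have := (Complex.hasStrictDerivAt_cpow_const (c := α)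
      (Complex.ofReal_mem_slitPlane.2 hx)).hasDerivAt.comp_ofReal
    rwa [Complex.cpow_sub _ _ hx0, Complex.cpow_one, ← mul_div_assoc] at this
  have hq : HasDerivAt (fun t : ℝ => q.eval (t : ℂ)) ((derivative q).eval (x : ℂ)) x :=
    (q.hasDerivAt (x : ℂ)).comp_ofReal
  refine ((hexp.fun_mul hpow).fun_mul hq).congr_deriv ?_
  simp only [weighted, conjEuler, eval_add, eval_mul, eval_sub, eval_X, eval_C]
  field_simp
  ring

theorem deriv_weighted_eventuallyEq (α : ℂ) (q : ℂ[X]) {x : ℝ} (hx : 0 < x) :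
    deriv (weighted α q) =ᶠ[𝓝 x] fun t => weighted α (conjEuler α q) t / t := by
  filter_upwards [Ioi_mem_nhds hx] with t ht using (hasDerivAt_weighted α q ht).deriv

theorem besselOp_weighted (α : ℂ) (q : ℂ[X]) {x : ℝ} (hx : 0 < x) :
    besselOp (weighted α q) x = weighted α (X ^ 2 * q - conjEuler α (conjEuler α q)) x := by
  have hx0 : (x : ℂ) ≠ 0 := by exact_mod_cast hx.ne'
  have hid : HasDerivAt (fun t : ℝ => (t : ℂ)) 1 x := by
    simpa using (hasDerivAt_id x).ofReal_comp
  have h2 := (hasDerivAt_weighted α (conjEuler α q) hx).fun_div hid hx0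
  rw [besselOp, (deriv_weighted_eventuallyEq α q hx).deriv_eq, h2.deriv,
    (hasDerivAt_weighted α q hx).deriv]
  simp only [weighted, eval_sub, eval_mul, eval_pow, eval_X]
  field_simp
  ring

theorem besselOp_congr {f g : ℝ → ℂ} {x : ℝ} (h : f =ᶠ[𝓝 x] g) :
    besselOp f x = besselOp g x := by
  rw [besselOp, besselOp, h.eq_of_nhds, h.deriv_eq, h.deriv.deriv_eq]

theorem besselOp_const_mul (c : ℂ) (f : ℝ → ℂ) (x : ℝ) :
    besselOp (fun t => c * f t) x = c * besselOp f x := by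
  simp only [besselOp, deriv_const_mul_field']
  ring

theorem iterate_besselOp_weighted_pseq (α : ℂ) (n k : ℕ) {x : ℝ} (hx : 0 < x) :
    besselOp^[k] (weighted α (pseq α n)) x = (-1) ^ k * weighted α (pseq α (n + k)) x := by
  induction k generalizing x with
  | zero => simp
  | succ k ih =>
    have hk : besselOp^[k] (weighted α (pseq α n)) =ᶠ[𝓝 x]
        fun t => (-1) ^ k * weighted α (pseq α (n + k)) t := by
      filter_upwards [Ioi_mem_nhds hx] with t ht using ih ht
    rw [Function.iterate_succ_apply', besselOp_congr hk, besselOp_const_mul,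
      besselOp_weighted α _ hx, ← add_assoc, pseq_succ, pow_succ]
    simp only [weighted, eval_sub]
    ring

end Bessel

open Bessel in
theorem stmt4 (α : ℂ) (n k : ℕ) (x : ℝ) (hx : 0 < x) :
    (besselOp^[k] (fun t : ℝ => Complex.exp (-t) * (t : ℂ) ^ α * (pseq α n).eval (t : ℂ))) x
      = (-1 : ℂ) ^ k * Complex.exp (-x) * (x : ℂ) ^ α * (pseq α (n + k)).eval (x : ℂ)
    ∧ (-1 : ℂ) ^ n *
        (besselOp^[k] (fun t : ℝ => Complex.exp (-t) * (t : ℂ) ^ α * (pseq α n).eval (t : ℂ))) x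
      = (-1 : ℂ) ^ k *
        (besselOp^[n] (fun t : ℝ => Complex.exp (-t) * (t : ℂ) ^ α * (pseq α k).eval (t : ℂ))) x := by
  have key (m j : ℕ) := iterate_besselOp_weighted_pseq α m j hx
  unfold weighted at key
  exact ⟨by rw [key]; ring, by rw [key, key, Nat.add_comm k n]; ring⟩
end

section
/- For every complex number α with Re(α) > 0 and every integer n ≥ 0, the generalized Euler number E_{2n}^{2α}(α) satisfies E_{2n}^{2α}(α) = (2^{α} / Γ(α)) ∫_0^∞ e^{−2x} x^{α−1} p_n(x;α) dx. (This is the paper's identity (2.25) with the correct constant.) -/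
/-!
Write `u = 1 + cosh t = 2 cosh²(t/2)`, so that `cosh(t/2)^{-2α} = 2^α u^{-α}`. For a polynomial
`q = Σ q_j x^j` put `L_q(s) = Σ q_j (α)_j s^{-(α+j)} = Γ(α)⁻¹ ∫₀^∞ e^{-sx} x^{α-1} q(x) dx`. Then
`d/ds L_q = -L_{xq}`, hence `d/dt L_q(u) = -sinh t · L_{xq}(u)`, and with `cosh t = u - 1`,
`sinh² t = u² - 2u` the second derivative is `(u² - 2u) L_{x²q}(u) - (u - 1) L_{xq}(u)`, which
is `L_{p}(u)` for `p` the recursion applied to `q`. Hence the `2n`-th derivative is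
`2^α L_{p_n}(1 + cosh t)`, and at `t = 0`, where `u = 2`, this is the right-hand side.
-/

open Polynomial MeasureTheory

namespace GeneralizedEuler

noncomputable def pseqStep (α : ℂ) (q : ℂ[X]) : ℂ[X] :=
  X ^ 2 * derivative (derivative q)
    - X * (2 * X - C (1 + 2 * α)) * derivative q
    - (C (2 * α + 1) * X - C (α ^ 2)) * q

lemma pseq_succ (α : ℂ) (n : ℕ) : pseq α (n + 1) = pseqStep α (pseq α n) := rfl

lemma pseqStep_add (α : ℂ) (p q : ℂ[X]) :
    pseqStep α (p + q) = pseqStep α p + pseqStep α q := by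
  simp only [pseqStep, derivative_add]
  ring

lemma X_mul_derivative_X_pow {R : Type*} [CommSemiring R] (m : ℕ) :
    (X : R[X]) * derivative (X ^ m) = C (m : R) * X ^ m := by
  cases m with
  | zero => simp
  | succ k => rw [derivative_X_pow_succ, pow_succ]; push_cast; ring

lemma pseqStep_C_mul_X_pow (α a : ℂ) (m : ℕ) :
    pseqStep α (C a * X ^ m)
      = C (a * (α + m) ^ 2) * X ^ m + C (-(a * (2 * α + 2 * m + 1))) * X ^ (m + 1) := by
  have h1 := X_mul_derivative_X_pow (R := ℂ) m
  have h2 : (X : ℂ[X]) ^ 2 * derivative (derivative (X ^ m))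
      = C ((m : ℂ) * (m - 1)) * X ^ m := by
    have h := congrArg (X * derivative ·) h1
    simp only [derivative_mul, derivative_X, derivative_C] at h
    simp only [map_mul, map_sub, map_one]
    linear_combination h - (1 - C (m : ℂ)) * h1
  simp only [pseqStep, derivative_C_mul, map_mul, map_add, map_sub, map_pow, map_one,
    map_ofNat, map_natCast, map_neg] at h1 h2 ⊢
  linear_combination C a * h2 + (1 + 2 * C α - 2 * X) * C a * h1

/-- Closed form of `Γ(α)⁻¹ ∫₀^∞ e^{-sx} x^{α-1} q(x) dx`, see `integral_exp_mul_cpow_mul_eval`. -/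
noncomputable def gammaLaplace (α : ℂ) (q : ℂ[X]) (s : ℂ) : ℂ :=
  q.sum fun j a => a * (ascPochhammer ℂ j).eval α * s ^ (-(α + j))

section gammaLaplace

variable (α : ℂ)

lemma gammaLaplace_add (p q : ℂ[X]) (s : ℂ) :
    gammaLaplace α (p + q) s = gammaLaplace α p s + gammaLaplace α q s :=
  sum_add_index _ _ _ (fun _ => by simp only [zero_mul]) (fun _ _ _ => by ring)

lemma gammaLaplace_C_mul_X_pow (a : ℂ) (m : ℕ) (s : ℂ) :
    gammaLaplace α (C a * X ^ m) s = a * (ascPochhammer ℂ m).eval α * s ^ (-(α + m)) := by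
  rw [gammaLaplace, C_mul_X_pow_eq_monomial, sum_monomial_index]
  simp only [zero_mul]

lemma gammaLaplace_one (s : ℂ) : gammaLaplace α 1 s = s ^ (-α) := by
  simpa using gammaLaplace_C_mul_X_pow α 1 0 s

lemma hasDerivAt_gammaLaplace (q : ℂ[X]) {s : ℂ} (hs : s ∈ Complex.slitPlane) :
    HasDerivAt (gammaLaplace α q) (-gammaLaplace α (X * q) s) s := by
  induction q using Polynomial.induction_on' with
  | add p q hp hq =>
    rw [show gammaLaplace α (p + q) = gammaLaplace α p + gammaLaplace α q from
      funext (gammaLaplace_add α p q), mul_add, gammaLaplace_add, neg_add]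
    exact hp.add hq
  | monomial m a =>
    rw [← C_mul_X_pow_eq_monomial, show (X : ℂ[X]) * (C a * X ^ m) = C a * X ^ (m + 1) by ring,
      gammaLaplace_C_mul_X_pow, ascPochhammer_succ_eval,
      show gammaLaplace α (C a * X ^ m) = fun s => a * (ascPochhammer ℂ m).eval α * s ^ (-(α + m))
        from funext (gammaLaplace_C_mul_X_pow α a m)]
    refine ((Complex.hasStrictDerivAt_cpow_const hs).hasDerivAt.const_mul _).congr_deriv ?_
    rw [show -(α + ((m + 1 : ℕ) : ℂ)) = -(α + m) - 1 by push_cast; ring]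
    ring

lemma gammaLaplace_pseqStep (q : ℂ[X]) {s : ℂ} (hs : s ≠ 0) :
    (s ^ 2 - 2 * s) * gammaLaplace α (X * (X * q)) s - (s - 1) * gammaLaplace α (X * q) s
      = gammaLaplace α (pseqStep α q) s := by
  induction q using Polynomial.induction_on' with
  | add p q hp hq =>
    simp only [mul_add, gammaLaplace_add, pseqStep_add, ← hp, ← hq]
    ring
  | monomial m a =>
    have hX (k : ℕ) : (X : ℂ[X]) * (C a * X ^ k) = C a * X ^ (k + 1) := by ring
    rw [← C_mul_X_pow_eq_monomial, pseqStep_C_mul_X_pow, gammaLaplace_add]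
    simp only [hX, gammaLaplace_C_mul_X_pow, ascPochhammer_succ_eval]
    set z := s ^ (-(α + m) - 2)
    have h1 : s ^ (-(α + ((m + 1 : ℕ) : ℂ))) = s * z := by
      rw [show -(α + ((m + 1 : ℕ) : ℂ)) = -(α + m) - 2 + 1 by push_cast; ring,
        Complex.cpow_add _ _ hs, Complex.cpow_one, mul_comm]
    have h2 : s ^ (-(α + ((m + 2 : ℕ) : ℂ))) = z := by congr 1; push_cast; ring
    have h0 : s ^ (-(α + m)) = s ^ 2 * z := by
      rw [show -(α + m) = -(α + m) - 2 + 2 by ring, Complex.cpow_add _ _ hs, Complex.cpow_two,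
        mul_comm]
    rw [h0, h1, h2]
    push_cast
    ring

lemma hasDerivAt_gammaLaplace_one_add_cosh (q : ℂ[X]) (t : ℝ) :
    HasDerivAt (fun t : ℝ => gammaLaplace α q (1 + Real.cosh t : ℝ))
      (-Real.sinh t * gammaLaplace α (X * q) (1 + Real.cosh t : ℝ)) t := by
  have hs : ((1 + Real.cosh t : ℝ) : ℂ) ∈ Complex.slitPlane :=
    Complex.ofReal_mem_slitPlane.2 (by positivity)
  have hu : HasDerivAt (fun t : ℝ => ((1 + Real.cosh t : ℝ) : ℂ)) (Real.sinh t) t :=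
    ((Real.hasDerivAt_cosh t).const_add 1).ofReal_comp
  refine ((hasDerivAt_gammaLaplace α q hs).comp t hu).congr_deriv ?_
  ring

lemma deriv_deriv_gammaLaplace_one_add_cosh (q : ℂ[X]) :
    deriv (deriv fun t : ℝ => gammaLaplace α q (1 + Real.cosh t : ℝ))
      = fun t => gammaLaplace α (pseqStep α q) (1 + Real.cosh t : ℝ) := by
  funext t
  rw [funext fun t => (hasDerivAt_gammaLaplace_one_add_cosh α q t).deriv]
  have hsinh : HasDerivAt (fun t : ℝ => -(Real.sinh t : ℂ)) (-Real.cosh t) t :=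
    (Real.hasDerivAt_sinh t).ofReal_comp.neg
  refine ((hsinh.mul (hasDerivAt_gammaLaplace_one_add_cosh α (X * q) t)).deriv).trans ?_
  rw [← gammaLaplace_pseqStep α q (Complex.ofReal_ne_zero.2 (by positivity))]
  have hsq : (Real.sinh t : ℂ) ^ 2 = (Real.cosh t : ℂ) ^ 2 - 1 := by
    exact_mod_cast Real.sinh_sq t
  rw [Complex.ofReal_add, Complex.ofReal_one]
  linear_combination gammaLaplace α (X * (X * q)) (1 + Real.cosh t) * hsq

lemma cosh_half_cpow (t : ℝ) :
    (Real.cosh (t / 2) : ℂ) ^ (-(2 * α)) = 2 ^ α * ((1 + Real.cosh t : ℝ) : ℂ) ^ (-α) := by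
  have hc : 0 < Real.cosh (t / 2) := Real.cosh_pos _
  have hu : 1 + Real.cosh t = 2 * Real.cosh (t / 2) ^ 2 := by
    have h := Real.cosh_two_mul (t / 2)
    rw [mul_div_cancel₀ t two_ne_zero, Real.sinh_sq] at h
    linarith
  have harg : Complex.arg (Real.cosh (t / 2)) = 0 := Complex.arg_ofReal_of_nonneg hc.le
  rw [neg_mul_eq_mul_neg, Complex.cpow_ofNat_mul' (by rw [harg]; linarith [Real.pi_pos])
      (by rw [harg]; linarith [Real.pi_pos]), hu, Complex.ofReal_mul,
    Complex.mul_cpow_ofReal_nonneg zero_le_two (by positivity), ← mul_assoc, Complex.ofReal_ofNat,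
    ← Complex.cpow_add _ _ two_ne_zero, add_neg_cancel, Complex.cpow_zero, one_mul,
    Complex.ofReal_pow]

lemma iteratedDeriv_cosh_half_cpow (n : ℕ) :
    iteratedDeriv (2 * n) (fun t : ℝ => (Real.cosh (t / 2) : ℂ) ^ (-(2 * α)))
      = fun t => 2 ^ α * gammaLaplace α (pseq α n) (1 + Real.cosh t : ℝ) := by
  induction n with
  | zero => simp only [mul_zero, iteratedDeriv_zero, cosh_half_cpow, pseq, gammaLaplace_one]
  | succ n ih =>
    rw [mul_add_one, iteratedDeriv_succ, iteratedDeriv_succ, ih, deriv_const_mul_field',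
      deriv_const_mul_field', deriv_deriv_gammaLaplace_one_add_cosh, pseq_succ]

end gammaLaplace

lemma ascPochhammer_eval_eq_Gamma_div {α : ℂ} (hα : 0 < α.re) (m : ℕ) :
    (ascPochhammer ℂ m).eval α = Complex.Gamma (α + m) / Complex.Gamma α := by
  refine (Complex.Gamma_add_nat_div_Gamma_eq α fun k hk => ?_).symm
  have hre := congrArg Complex.re hk
  simp only [Complex.neg_re, Complex.natCast_re] at hre
  linarith [k.cast_nonneg (α := ℝ)]

lemma re_add_natCast_pos {α : ℂ} (hα : 0 < α.re) (m : ℕ) : 0 < (α + m).re := by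
  simpa using add_pos_of_pos_of_nonneg hα m.cast_nonneg

section Integral

variable {α : ℂ} (hα : 0 < α.re) {r : ℝ} (hr : 0 < r)
include hα hr

lemma integral_exp_mul_cpow_mul_pow (m : ℕ) :
    ∫ x in Set.Ioi (0 : ℝ), Complex.exp (-r * x) * (x : ℂ) ^ (α - 1) * (x : ℂ) ^ m
      = Complex.Gamma α * ((ascPochhammer ℂ m).eval α * (r : ℂ) ^ (-(α + m))) := by
  have harg : Complex.arg r ≠ Real.pi := by
    rw [Complex.arg_ofReal_of_nonneg hr.le]; exact Real.pi_ne_zero.symm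
  calc ∫ x in Set.Ioi (0 : ℝ), Complex.exp (-r * x) * (x : ℂ) ^ (α - 1) * (x : ℂ) ^ m
      = ∫ x in Set.Ioi (0 : ℝ), (x : ℂ) ^ (α + m - 1) * Complex.exp (-(r * x)) := by
        refine setIntegral_congr_fun measurableSet_Ioi fun x (hx : 0 < x) => ?_
        rw [add_sub_right_comm, Complex.cpow_add _ _ (Complex.ofReal_ne_zero.2 hx.ne'),
          Complex.cpow_natCast, neg_mul]
        ring
    _ = (1 / r) ^ (α + m) * Complex.Gamma (α + m) :=
        Complex.integral_cpow_mul_exp_neg_mul_Ioi (re_add_natCast_pos hα m) hr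
    _ = Complex.Gamma α * ((ascPochhammer ℂ m).eval α * (r : ℂ) ^ (-(α + m))) := by
        rw [ascPochhammer_eval_eq_Gamma_div hα, one_div, Complex.inv_cpow _ _ harg,
          Complex.cpow_neg]
        field_simp [Complex.Gamma_ne_zero_of_re_pos hα]

lemma integrableOn_exp_mul_cpow_mul_eval (q : ℂ[X]) :
    IntegrableOn (fun x : ℝ => Complex.exp (-r * x) * (x : ℂ) ^ (α - 1) * q.eval (x : ℂ))
      (Set.Ioi 0) := by
  induction q using Polynomial.induction_on' with
  | add p q hp hq =>
    simp only [eval_add, mul_add]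
    exact hp.add hq
  | monomial m a =>
    have hne : ∫ x in Set.Ioi (0 : ℝ), Complex.exp (-r * x) * (x : ℂ) ^ (α - 1) * (x : ℂ) ^ m
        ≠ 0 := by
      rw [integral_exp_mul_cpow_mul_pow hα hr, ascPochhammer_eval_eq_Gamma_div hα]
      have hΓ := Complex.Gamma_ne_zero_of_re_pos hα
      have hΓm := Complex.Gamma_ne_zero_of_re_pos (re_add_natCast_pos hα m)
      simp [Complex.cpow_eq_zero_iff, hr.ne', hΓ, hΓm]
    simp only [← C_mul_X_pow_eq_monomial, eval_mul, eval_C, eval_pow, eval_X, mul_left_comm _ a]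
    -- integrability for free: the integral is nonzero
    exact (Integrable.of_integral_ne_zero hne).const_mul a

lemma integral_exp_mul_cpow_mul_eval (q : ℂ[X]) :
    ∫ x in Set.Ioi (0 : ℝ), Complex.exp (-r * x) * (x : ℂ) ^ (α - 1) * q.eval (x : ℂ)
      = Complex.Gamma α * gammaLaplace α q r := by
  induction q using Polynomial.induction_on' with
  | add p q hp hq =>
    simp only [eval_add, mul_add, gammaLaplace_add]
    rw [integral_add (integrableOn_exp_mul_cpow_mul_eval hα hr p)
      (integrableOn_exp_mul_cpow_mul_eval hα hr q), hp, hq]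
  | monomial m a =>
    simp only [← C_mul_X_pow_eq_monomial, eval_mul, eval_C, eval_pow, eval_X, mul_left_comm _ a,
      integral_const_mul, integral_exp_mul_cpow_mul_pow hα hr, gammaLaplace_C_mul_X_pow]
    ring

end Integral

end GeneralizedEuler

/-- For `Re α > 0` and `n ≥ 0`, the generalized Euler number
`E_{2n}^{2α}(α) = (d/dt)^{2n} (cosh(t/2))^{−2α} |_{t=0}` satisfies
`E_{2n}^{2α}(α) = (2^α / Γ(α)) ∫₀^∞ e^{−2x} x^{α−1} p_n(x;α) dx`. -/
theorem stmt10 (α : ℂ) (hα : 0 < α.re) (n : ℕ) :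
    iteratedDeriv (2 * n) (fun t : ℝ => ((Real.cosh (t / 2) : ℂ)) ^ (-(2 * α))) 0
      = (2 : ℂ) ^ α / Complex.Gamma α *
          ∫ x in Set.Ioi (0 : ℝ),
            Complex.exp (-2 * x) * (x : ℂ) ^ (α - 1) * (pseq α n).eval (x : ℂ) := by
  have hI := GeneralizedEuler.integral_exp_mul_cpow_mul_eval hα two_pos (pseq α n)
  rw [Complex.ofReal_ofNat] at hI
  simp only [GeneralizedEuler.iteratedDeriv_cosh_half_cpow, Real.cosh_zero, one_add_one_eq_two,
    Complex.ofReal_ofNat]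
  rw [hI, ← mul_assoc, div_mul_cancel₀ _ (Complex.Gamma_ne_zero_of_re_pos hα)]
end

section
/- For every integer m ≥ 1 and every integer n ≥ 0 the polynomial identity x^m p_n(x;m) = ((−1)^m / (2^m (1/2)_m)) Σ_{σ=0}^{m} ŝ_0(m,σ) p_{n+σ}(x;0) holds in ℚ[x] (equivalently in ℂ[x]); here 2^m (1/2)_m = (2m−1)!!. (This is the paper's identity (2.29) with the correct constant.) -/
open Polynomial Finset

/-- The 0-modified Stirling numbers of the first kind `ŝ₀(m,σ)`: the coefficients in
`∏_{j=0}^{m−1} (X − j²) = Σ_{σ=0}^{m} ŝ₀(m,σ) X^σ`. -/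
noncomputable def shat0 (m σ : ℕ) : ℂ :=
  (∏ j ∈ range m, (X - C ((j : ℂ) ^ 2))).coeff σ

/-! Let `L_α` be the operator with `p_{n+1}(·;α) = L_α p_n(·;α)`. It satisfies
`L_α (x q) = x L_{α+1} q`, so `x^m p_n(x;m) = L_0^n x^m`. Moreover
`(L_0 - k²) x^k = -(2k+1) x^{k+1}`, hence
`∏_{j<m} (L_0 - j²) 1 = ∏_{j<m} (-(2j+1)) x^m = (-1)^m 2^m (1/2)_m x^m`. Applying `L_0^n`, which
commutes with every polynomial in `L_0`, and expanding the product through `ŝ₀` gives the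
identity. -/

noncomputable def pseqOp (α : ℂ) : Module.End ℂ ℂ[X] where
  toFun p := X ^ 2 * derivative (derivative p)
        - X * (2 * X - C (1 + 2 * α)) * derivative p
        - (C (2 * α + 1) * X - C (α ^ 2)) * p
  map_add' p q := by simp only [derivative_add]; ring
  map_smul' c p := by simp only [smul_eq_C_mul, derivative_C_mul, RingHom.id_apply]; ring

lemma pseqOp_apply (α : ℂ) (p : ℂ[X]) : pseqOp α p =
    X ^ 2 * derivative (derivative p)
      - X * (2 * X - C (1 + 2 * α)) * derivative p
      - (C (2 * α + 1) * X - C (α ^ 2)) * p := rfl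

lemma pseq_eq_pow_apply_one (α : ℂ) (n : ℕ) : pseq α n = (pseqOp α ^ n) 1 := by
  induction n with
  | zero => rfl
  | succ n ih => rw [pow_succ', Module.End.mul_apply, ← ih]; rfl

lemma pseqOp_X_mul (α : ℂ) (q : ℂ[X]) : pseqOp α (X * q) = X * pseqOp (α + 1) q := by
  simp only [pseqOp_apply, derivative_mul, derivative_X, one_mul, map_add, map_mul, map_one,
    map_ofNat, map_pow]
  ring

lemma pseqOp_X_pow_mul (α : ℂ) (m : ℕ) (q : ℂ[X]) :
    pseqOp α (X ^ m * q) = X ^ m * pseqOp (α + m) q := by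
  induction m generalizing α with
  | zero => simp
  | succ m ih =>
    rw [pow_succ', mul_assoc, pseqOp_X_mul, ih, Nat.cast_succ, add_comm (m : ℂ), add_assoc,
      mul_assoc]

lemma pseqOp_pow_X_pow_mul (α : ℂ) (m n : ℕ) (q : ℂ[X]) :
    (pseqOp α ^ n) (X ^ m * q) = X ^ m * (pseqOp (α + m) ^ n) q := by
  induction n with
  | zero => rfl
  | succ n ih =>
    rw [pow_succ', Module.End.mul_apply, ih, pseqOp_X_pow_mul, pow_succ', Module.End.mul_apply]

lemma X_pow_mul_pseq (α : ℂ) (m n : ℕ) :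
    X ^ m * pseq (α + m) n = (pseqOp α ^ n) (X ^ m) := by
  rw [pseq_eq_pow_apply_one, ← pseqOp_pow_X_pow_mul, mul_one]

lemma pseqOp_zero_X_pow (k : ℕ) :
    pseqOp 0 (X ^ k) = C ((k : ℂ) ^ 2) * X ^ k - C (2 * (k : ℂ) + 1) * X ^ (k + 1) := by
  rw [← mul_one (X ^ k), pseqOp_X_pow_mul, pseqOp_apply]
  simp only [derivative_one, derivative_zero, mul_zero, sub_zero, zero_add, map_add, map_mul,
    map_ofNat, map_one]
  ring

lemma aeval_pseqOp_prod_apply_one (m : ℕ) :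
    aeval (pseqOp 0) (∏ j ∈ range m, (X - C ((j : ℂ) ^ 2))) 1
      = C (∏ j ∈ range m, -(2 * (j : ℂ) + 1)) * X ^ m := by
  induction m with
  | zero => simp
  | succ m ih =>
    rw [prod_range_succ, mul_comm, map_mul, Module.End.mul_apply, ih, map_sub, aeval_X,
      aeval_C, LinearMap.sub_apply, Module.algebraMap_end_apply, ← smul_eq_C_mul, map_smul,
      pseqOp_zero_X_pow, prod_range_succ, smul_eq_C_mul, smul_eq_C_mul]
    simp only [map_mul, map_neg, smul_eq_C_mul]
    ring

lemma aeval_pseqOp_apply_pseq (α : ℂ) (P : ℂ[X]) (n : ℕ) :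
    aeval (pseqOp α) P (pseq α n)
      = ∑ σ ∈ range (P.natDegree + 1), C (P.coeff σ) * pseq α (n + σ) := by
  rw [aeval_eq_sum_range, LinearMap.sum_apply]
  refine sum_congr rfl fun σ _ => ?_
  rw [LinearMap.smul_apply, smul_eq_C_mul, pseq_eq_pow_apply_one, pseq_eq_pow_apply_one,
    ← Module.End.mul_apply, ← pow_add, add_comm σ]

lemma prod_range_neg_two_mul_add_one (m : ℕ) :
    ∏ j ∈ range m, -(2 * (j : ℂ) + 1)
      = (-1) ^ m * 2 ^ m * (ascPochhammer ℂ m).eval (1 / 2 : ℂ) := by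
  induction m with
  | zero => simp
  | succ m ih =>
    rw [prod_range_succ, ih, ascPochhammer_succ_eval]
    ring

lemma prod_range_neg_two_mul_add_one_ne_zero (m : ℕ) :
    ∏ j ∈ range m, -(2 * (j : ℂ) + 1) ≠ 0 :=
  prod_ne_zero_iff.2 fun _ _ => neg_ne_zero.2 (by norm_cast)

lemma inv_prod_range_neg_two_mul_add_one (m : ℕ) :
    (∏ j ∈ range m, -(2 * (j : ℂ) + 1))⁻¹
      = (-1) ^ m / (2 ^ m * (ascPochhammer ℂ m).eval (1 / 2 : ℂ)) := by
  rw [prod_range_neg_two_mul_add_one, mul_assoc, mul_inv, ← inv_pow, inv_neg_one,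
    ← div_eq_mul_inv]

theorem stmt12_general (m : ℕ) (n : ℕ) :
    X ^ m * pseq (m : ℂ) n
      = C ((-1 : ℂ) ^ m / (2 ^ m * (ascPochhammer ℂ m).eval (1 / 2 : ℂ))) *
          ∑ σ ∈ range (m + 1), C (shat0 m σ) * pseq 0 (n + σ) := by
  set L := pseqOp 0
  set P := ∏ j ∈ range m, (X - C ((j : ℂ) ^ 2))
  set c := ∏ j ∈ range m, -(2 * (j : ℂ) + 1)
  have key : C c * (X ^ m * pseq m n)
      = ∑ σ ∈ range (m + 1), C (shat0 m σ) * pseq 0 (n + σ) :=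
    calc C c * (X ^ m * pseq m n)
        = C c * (L ^ n) (X ^ m) := by rw [← X_pow_mul_pseq, zero_add]
      _ = (L ^ n) (aeval L P 1) := by
        rw [aeval_pseqOp_prod_apply_one, ← smul_eq_C_mul, ← map_smul, smul_eq_C_mul]
      _ = aeval L P ((L ^ n) 1) := by
        rw [← aeval_X_pow (R := ℂ), ← Module.End.mul_apply,
          ((Commute.all _ P).map (aeval L)).eq]
        rfl
      _ = ∑ σ ∈ range (m + 1), C (shat0 m σ) * pseq 0 (n + σ) := by
        rw [← pseq_eq_pow_apply_one, aeval_pseqOp_apply_pseq,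
          natDegree_finsetProd_X_sub_C_eq_card, card_range]
        rfl
  rw [← inv_prod_range_neg_two_mul_add_one, ← key, ← mul_assoc, ← C_mul,
    inv_mul_cancel₀ (prod_range_neg_two_mul_add_one_ne_zero m), C_1, one_mul]

theorem stmt12 (m : ℕ) (hm : 1 ≤ m) (n : ℕ) :
    X ^ m * pseq (m : ℂ) n
      = C ((-1 : ℂ) ^ m / (2 ^ m * (ascPochhammer ℂ m).eval (1 / 2 : ℂ))) *
          ∑ σ ∈ range (m + 1), C (shat0 m σ) * pseq 0 (n + σ) :=
  stmt12_general m n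
end

section
/- For every integer m ≥ 1 and every integer n ≥ 0, the generalized Euler number E_{2n}^{2m}(m) := (d/dt)^{2n} (cosh(t/2))^{−2m} |_{t=0} satisfies E_{2n}^{2m}(m) = ((−1)^m 4^m m / (2m)!) Σ_{σ=1}^{m} ((1 − 2^{2n+2σ})/(n+σ)) ŝ_0(m,σ) B_{2n+2σ}, where B_k are the Bernoulli numbers. (This is the paper's Euler–Bernoulli identity with the correct constant.) -/
/-!
Write `g_k(t) = cosh(t/2)⁻ᵏ`. From `cosh² − sinh² = 1` one gets
`g_k'' = (k²/4) g_k − (k(k+1)/4) g_{k+2}`, so each step `2m ↦ 2m + 2` expresses the derivatives of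
`g_{2m+2}` at `0` through those of `g_{2m}` shifted by two, i.e. multiplies the generating
polynomial by `X − m²`; starting from `m = 1` this builds up `∏_{j<m} (X − j²)`.
The base case is `g_2 = −4 (d/dt) (eᵗ + 1)⁻¹` together with
`t / (eᵗ + 1) = B(t) − B(2t)`, where `B(t) = t / (eᵗ − 1)` generates the Bernoulli numbers.
-/

open Polynomial Finset
open scoped ContDiff

/-- The 0-modified Stirling numbers of the first kind `ŝ₀(m,σ)` (real version):
the coefficients in `∏_{j=0}^{m−1} (X − j²) = Σ_{σ=0}^{m} ŝ₀(m,σ) X^σ`. -/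
noncomputable def shat0R (m σ : ℕ) : ℝ :=
  (∏ j ∈ range m, (X - C ((j : ℝ) ^ 2))).coeff σ

theorem bernoulliPowerSeries_sub_rescale_two_mul_exp_add_one
    {A : Type*} [CommRing A] [Algebra ℚ A] [IsDomain A] :
    (bernoulliPowerSeries A - PowerSeries.rescale (2 : A) (bernoulliPowerSeries A)) *
      (PowerSeries.exp A + 1) = PowerSeries.X := by
  set B := bernoulliPowerSeries A
  set e := PowerSeries.exp A
  have he : e - 1 ≠ 0 := fun h => by
    simpa [e, PowerSeries.coeff_exp] using congrArg (PowerSeries.coeff 1) h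
  have hB : B * (e - 1) = PowerSeries.X := bernoulliPowerSeries_mul_exp_sub_one A
  have hB2 : PowerSeries.rescale (2 : A) B * (PowerSeries.rescale (2 : A) e - 1)
      = 2 * PowerSeries.X := by
    simpa [map_ofNat] using congrArg (PowerSeries.rescale (2 : A)) hB
  have he2 : PowerSeries.rescale (2 : A) e = e * e := by
    simpa [one_add_one_eq_two] using (PowerSeries.exp_mul_exp_eq_exp_add (A := A) 1 1).symm
  refine mul_right_cancel₀ he ?_
  rw [he2] at hB2
  linear_combination (e + 1) * hB - hB2

section TaylorSeries

variable {𝕜 : Type*} [NontriviallyNormedField 𝕜]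

noncomputable def taylorSeries (f : 𝕜 → 𝕜) (x : 𝕜) : PowerSeries 𝕜 :=
  PowerSeries.mk fun k => iteratedDeriv k f x / k.factorial

theorem taylorSeries_mul [CharZero 𝕜] {f g : 𝕜 → 𝕜} {x : 𝕜} (hf : ContDiffAt 𝕜 ∞ f x)
    (hg : ContDiffAt 𝕜 ∞ g x) :
    taylorSeries (fun t => f t * g t) x = taylorSeries f x * taylorSeries g x := by
  ext k
  rw [PowerSeries.coeff_mul, Nat.sum_antidiagonal_eq_sum_range_succ
    (fun i j => PowerSeries.coeff i (taylorSeries f x) * PowerSeries.coeff j (taylorSeries g x))]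
  simp only [taylorSeries, PowerSeries.coeff_mk]
  rw [iteratedDeriv_fun_mul (hf.of_le (mod_cast le_top)) (hg.of_le (mod_cast le_top)), sum_div]
  refine sum_congr rfl fun i hi => ?_
  have hk : (k.factorial : 𝕜) ≠ 0 := Nat.cast_ne_zero.mpr k.factorial_ne_zero
  rw [Nat.cast_choose 𝕜 (Nat.lt_succ_iff.mp (mem_range.mp hi))]
  field_simp

theorem taylorSeries_add {f g : 𝕜 → 𝕜} {x : 𝕜} (hf : ContDiffAt 𝕜 ∞ f x)
    (hg : ContDiffAt 𝕜 ∞ g x) :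
    taylorSeries (fun t => f t + g t) x = taylorSeries f x + taylorSeries g x := by
  ext k
  simp only [taylorSeries, PowerSeries.coeff_mk, map_add,
    iteratedDeriv_fun_add (hf.of_le (mod_cast le_top)) (hg.of_le (mod_cast le_top)), add_div]

theorem taylorSeries_const (c : 𝕜) (x : 𝕜) : taylorSeries (fun _ => c) x = PowerSeries.C c := by
  ext k
  rcases k with _ | k <;> simp [taylorSeries, iteratedDeriv_const, PowerSeries.coeff_C]

end TaylorSeries

theorem taylorSeries_exp : taylorSeries Real.exp 0 = PowerSeries.exp ℝ := by
  ext k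
  simp [taylorSeries, PowerSeries.coeff_exp, iteratedDeriv_eq_iterate, Real.iter_deriv_exp,
    div_eq_inv_mul]

theorem iteratedDeriv_inv_exp_add_one_zero (k : ℕ) :
    iteratedDeriv k (fun t => (Real.exp t + 1)⁻¹) 0
      = (1 - 2 ^ (k + 1)) * _root_.bernoulli (k + 1) / (k + 1) := by
  set h : ℝ → ℝ := fun t => (Real.exp t + 1)⁻¹
  have hexp : ContDiff ℝ ∞ fun t => Real.exp t + 1 := by fun_prop
  have hh : ContDiff ℝ ∞ h := hexp.inv fun t => by positivity
  have hprod : taylorSeries h 0 * (PowerSeries.exp ℝ + 1) = 1 := by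
    have hmul : (fun t => h t * (Real.exp t + 1)) = fun _ => 1 :=
      funext fun t => inv_mul_cancel₀ (by positivity)
    rw [← taylorSeries_exp, ← map_one PowerSeries.C, ← taylorSeries_const,
      ← taylorSeries_add (by fun_prop) contDiffAt_const,
      ← taylorSeries_mul hh.contDiffAt hexp.contDiffAt, hmul]
  have hX : PowerSeries.X * taylorSeries h 0
      = bernoulliPowerSeries ℝ - PowerSeries.rescale (2 : ℝ) (bernoulliPowerSeries ℝ) := by
    refine mul_right_cancel₀ (b := PowerSeries.exp ℝ + 1) (fun h0 => ?_) ?_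
    · simpa using congrArg PowerSeries.constantCoeff h0
    · rw [mul_assoc, hprod, mul_one, bernoulliPowerSeries_sub_rescale_two_mul_exp_add_one]
  have hcoeff := congrArg (PowerSeries.coeff (k + 1)) hX
  simp only [PowerSeries.coeff_succ_X_mul, taylorSeries, bernoulliPowerSeries, map_sub,
    PowerSeries.coeff_rescale, PowerSeries.coeff_mk, eq_ratCast, Rat.cast_div,
    Rat.cast_natCast] at hcoeff
  have hk : (k.factorial : ℝ) ≠ 0 := Nat.cast_ne_zero.mpr k.factorial_ne_zero
  rw [Nat.factorial_succ] at hcoeff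
  push_cast at hcoeff
  field_simp at hcoeff
  rw [eq_div_iff (by positivity)]
  linear_combination hcoeff

noncomputable def sechHalfPow (k : ℕ) (t : ℝ) : ℝ := (Real.cosh (t / 2))⁻¹ ^ k

theorem contDiff_sechHalfPow (k : ℕ) : ContDiff ℝ ∞ (sechHalfPow k) :=
  ((Real.contDiff_cosh.comp (contDiff_id.div_const 2)).inv fun _ => (Real.cosh_pos _).ne').pow k

theorem hasDerivAt_sechHalfPow (k : ℕ) (t : ℝ) :
    HasDerivAt (sechHalfPow k) (-(k / 2) * (Real.sinh (t / 2) * sechHalfPow (k + 1) t)) t := by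
  have hc : Real.cosh (t / 2) ≠ 0 := (Real.cosh_pos _).ne'
  have h : HasDerivAt (sechHalfPow k) _ t :=
    ((((hasDerivAt_id' t).div_const 2).cosh).inv hc).fun_pow k
  refine h.congr_deriv ?_
  rcases k with _ | k
  · simp
  · simp only [sechHalfPow, Pi.inv_apply, Nat.cast_add, Nat.cast_one, Nat.add_sub_cancel]
    ring

theorem deriv_deriv_sechHalfPow (k : ℕ) :
    deriv (deriv (sechHalfPow k))
      = fun t => (k ^ 2 / 4) * sechHalfPow k t - (k * (k + 1) / 4) * sechHalfPow (k + 2) t := by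
  have hderiv : deriv (sechHalfPow k)
      = fun t => -(k / 2) * (Real.sinh (t / 2) * sechHalfPow (k + 1) t) :=
    funext fun t => (hasDerivAt_sechHalfPow k t).deriv
  rw [hderiv]
  funext t
  have hc : Real.cosh (t / 2) ≠ 0 := (Real.cosh_pos _).ne'
  have hsinh := ((hasDerivAt_id' t).div_const 2).sinh
  refine ((hsinh.mul (hasDerivAt_sechHalfPow (k + 1) t)).const_mul (-(k / 2 : ℝ))).deriv.trans ?_
  have hs := Real.sinh_sq (t / 2)
  have hu : Real.cosh (t / 2) * (Real.cosh (t / 2))⁻¹ = 1 := mul_inv_cancel₀ hc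
  simp only [sechHalfPow]
  set c := Real.cosh (t / 2)
  set u := c⁻¹
  push_cast
  linear_combination (k * (k + 1) / 4 * u ^ (k + 2)) * hs
    + (-(k / 4) * u ^ k + k * (k + 1) / 4 * (c * u + 1) * u ^ k) * hu

theorem iteratedDeriv_sechHalfPow_add_two {k : ℕ} (hk : k ≠ 0) (n : ℕ) (x : ℝ) :
    iteratedDeriv n (sechHalfPow (k + 2)) x
      = k / (k + 1) * iteratedDeriv n (sechHalfPow k) x
        - 4 / (k * (k + 1)) * iteratedDeriv (n + 2) (sechHalfPow k) x := by
  have hk' : (k : ℝ) ≠ 0 := Nat.cast_ne_zero.mpr hk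
  have hrec : sechHalfPow (k + 2) = fun t =>
      k / (k + 1) * sechHalfPow k t - 4 / (k * (k + 1)) * deriv^[2] (sechHalfPow k) t := by
    funext t
    simp only [Function.iterate_succ, Function.iterate_zero, Function.comp_apply, id,
      deriv_deriv_sechHalfPow]
    field_simp
    ring
  have hsmooth := contDiff_sechHalfPow k
  have h₁ := (contDiff_const (c := (k / (k + 1) : ℝ))).mul hsmooth
  have h₂ := (contDiff_const (c := (4 / (k * (k + 1)) : ℝ))).mul (hsmooth.iterate_deriv 2)
  rw [hrec, iteratedDeriv_fun_sub (h₁.contDiffAt.of_le (mod_cast le_top))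
      (h₂.contDiffAt.of_le (mod_cast le_top)),
    iteratedDeriv_const_mul_field, iteratedDeriv_const_mul_field, iteratedDeriv_eq_iterate,
    iteratedDeriv_eq_iterate, iteratedDeriv_eq_iterate, ← Function.iterate_add_apply]

theorem sechHalfPow_two_eq :
    sechHalfPow 2 = fun t => -4 * deriv (fun t => (Real.exp t + 1)⁻¹) t := by
  funext t
  have hderiv := ((Real.hasDerivAt_exp t).add_const 1).inv (by positivity : Real.exp t + 1 ≠ 0)
  have hsq : Real.exp t = Real.exp (t / 2) ^ 2 := by rw [sq, ← Real.exp_add, add_halves]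
  rw [show deriv (fun t => (Real.exp t + 1)⁻¹) t = _ from hderiv.deriv, sechHalfPow,
    Real.cosh_eq, Real.exp_neg, hsq]
  have hu := Real.exp_pos (t / 2)
  field_simp
  ring

theorem iteratedDeriv_sechHalfPow_two_zero (n : ℕ) :
    iteratedDeriv n (sechHalfPow 2) 0
      = -4 * ((1 - 2 ^ (n + 2)) * _root_.bernoulli (n + 2) / (n + 2)) := by
  rw [sechHalfPow_two_eq, iteratedDeriv_const_mul_field, ← iteratedDeriv_succ',
    iteratedDeriv_inv_exp_add_one_zero]
  push_cast
  ring

noncomputable def coeffPairing {R : Type*} [CommSemiring R] (w : ℕ → R) : R[X] →ₗ[R] R :=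
  lsum fun σ => LinearMap.mulRight R (w σ)

section coeffPairing

variable {R : Type*} [CommSemiring R] (w : ℕ → R)

theorem coeffPairing_X : coeffPairing w X = w 1 := by
  simp [coeffPairing, sum_X_index]

theorem coeffPairing_mul_X (p : R[X]) :
    coeffPairing w (p * X) = coeffPairing (fun σ => w (σ + 1)) p := by
  induction p using Polynomial.induction_on' with
  | add p q hp hq => rw [add_mul, map_add, map_add, hp, hq]
  | monomial k a => simp [coeffPairing, monomial_mul_X, sum_monomial_index]

theorem coeffPairing_eq_sum_range (p : R[X]) {N : ℕ} (hN : p.natDegree < N) :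
    coeffPairing w p = ∑ σ ∈ range N, p.coeff σ * w σ :=
  sum_over_range' p (f := fun σ c => c * w σ) (fun _ => zero_mul _) N hN

end coeffPairing

noncomputable def zeroStirlingPoly (m : ℕ) : ℝ[X] := ∏ j ∈ range m, (X - C ((j : ℝ) ^ 2))

theorem zeroStirlingPoly_succ (m : ℕ) :
    zeroStirlingPoly (m + 1) = zeroStirlingPoly m * X - ((m : ℝ) ^ 2) • zeroStirlingPoly m := by
  simp only [zeroStirlingPoly]
  rw [prod_range_succ, mul_sub, smul_eq_C_mul, mul_comm (C _)]

theorem coeffPairing_zeroStirlingPoly {m : ℕ} (hm : m ≠ 0) (w : ℕ → ℝ) :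
    coeffPairing w (zeroStirlingPoly m) = ∑ σ ∈ Icc 1 m, shat0R m σ * w σ := by
  have hdeg : (zeroStirlingPoly m).natDegree < m + 1 := by
    rw [zeroStirlingPoly, natDegree_finsetProd_X_sub_C_eq_card, card_range]
    exact m.lt_succ_self
  have hcoeff0 : (zeroStirlingPoly m).coeff 0 = 0 := by
    rw [coeff_zero_eq_eval_zero, zeroStirlingPoly, eval_prod]
    exact prod_eq_zero (mem_range.mpr (Nat.pos_of_ne_zero hm)) (by simp)
  rw [coeffPairing_eq_sum_range w _ hdeg, range_eq_Ico, sum_eq_sum_Ico_succ_bot (by omega),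
    hcoeff0, zero_mul, zero_add, Ico_add_one_right_eq_Icc]
  rfl

noncomputable def bernoulliWeight (j : ℕ) : ℝ :=
  (1 - 2 ^ (2 * j)) / j * _root_.bernoulli (2 * j)

noncomputable def eulerConst (m : ℕ) : ℝ := (-1) ^ m * 4 ^ m * m / (2 * m).factorial

theorem eulerConst_succ {m : ℕ} (hm : m ≠ 0) :
    eulerConst (m + 1) = -(2 / (m * (2 * m + 1))) * eulerConst m := by
  have hm' : (m : ℝ) ≠ 0 := Nat.cast_ne_zero.mpr hm
  rw [eulerConst, eulerConst, show 2 * (m + 1) = 2 * m + 1 + 1 by ring, Nat.factorial_succ,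
    Nat.factorial_succ]
  push_cast
  field_simp
  ring

theorem iteratedDeriv_sechHalfPow_two_mul_zero {m : ℕ} (hm : 1 ≤ m) (n : ℕ) :
    iteratedDeriv (2 * n) (sechHalfPow (2 * m)) 0
      = eulerConst m * coeffPairing (fun σ => bernoulliWeight (n + σ)) (zeroStirlingPoly m) := by
  induction m, hm using Nat.le_induction generalizing n with
  | base =>
    rw [iteratedDeriv_sechHalfPow_two_zero, zeroStirlingPoly, prod_range_one, Nat.cast_zero,
      zero_pow two_ne_zero, map_zero, sub_zero, coeffPairing_X, bernoulliWeight, eulerConst,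
      show 2 * n + 2 = 2 * (n + 1) by ring]
    push_cast
    field_simp
    ring
  | succ m hm ih =>
    have hm0 : m ≠ 0 := by omega
    have hm' : (m : ℝ) ≠ 0 := Nat.cast_ne_zero.mpr hm0
    rw [show 2 * (m + 1) = 2 * m + 2 by ring, iteratedDeriv_sechHalfPow_add_two (by omega),
      show 2 * n + 2 = 2 * (n + 1) by ring, ih, ih, zeroStirlingPoly_succ, map_sub, map_smul,
      coeffPairing_mul_X, eulerConst_succ hm0]
    simp only [add_assoc, add_comm 1, smul_eq_mul]
    push_cast
    field_simp
    ring

theorem stmt13 (m : ℕ) (hm : 1 ≤ m) (n : ℕ) :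
    iteratedDeriv (2 * n) (fun t : ℝ => Real.cosh (t / 2) ^ (-(2 * (m : ℤ)))) 0
      = (-1 : ℝ) ^ m * 4 ^ m * m / (Nat.factorial (2 * m)) *
          ∑ σ ∈ Icc 1 m,
            ((1 - 2 ^ (2 * n + 2 * σ)) / ((n : ℝ) + σ)) * shat0R m σ *
              ((bernoulli (2 * n + 2 * σ) : ℚ) : ℝ) := by
  have hfun : (fun t : ℝ => Real.cosh (t / 2) ^ (-(2 * (m : ℤ)))) = sechHalfPow (2 * m) := by
    funext t
    rw [sechHalfPow, zpow_neg, ← inv_zpow, ← zpow_natCast]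
    push_cast
    rfl
  rw [hfun, iteratedDeriv_sechHalfPow_two_mul_zero hm,
    coeffPairing_zeroStirlingPoly (by omega), eulerConst]
  congr 1
  refine sum_congr rfl fun σ _ => ?_
  rw [bernoulliWeight, mul_add]
  push_cast
  ring
end
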